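/- arXiv:2506.13633 — 2 statements merged into one kernel-verified Lean document; each statement's English description precedes it below -/
import Mathlib

section
/- There exists a constant C, depending only on T, R_D and the bounds and Lipschitz constants of σ and σ', such that for all t,t' ∈ [0,T], all x,x' ∈ D, and all parameter tuples (c¹,wᵗ¹,w¹,η¹), (c²,wᵗ²,w²,η²) ∈ ℝ × ℝ × ℝ^d × ℝ: |k(t,x,t',x'; c¹,wᵗ¹,w¹,η¹) − k(t,x,t',x'; c²,wᵗ²,w²,η²)| ≤ C (1 + (c¹)² + (c²)²) (|c¹−c²| + |wᵗ¹−wᵗ²| + ‖w¹−w²‖ + |η¹−η²|). -/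
/-! Both pre-activations `wᵗ t + ⟨w, x⟩ + η` and `wᵗ t' + ⟨w, x'⟩ + η` move by at most
`M (|Δwᵗ| + ‖Δw‖ + |Δη|)` with `M = max (max T R_D) 1`. A product of two bounded Lipschitz
factors changes by at most `C K` times the sum of the argument shifts, and the weight `c²`
contributes through `|c₁² - c₂²| ≤ (1 + c₁² + c₂²) |c₁ - c₂|`; the factor
`t t' + ⟨x, x'⟩ + 1` is bounded by `3 M²`. -/

open MeasureTheory Set

noncomputable section

/-- The neural-network (neural tangent) kernel integrand
`k(t,x,t',x'; c,wᵗ,w,η)` from the paper, with parameter tuple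
`p = (c, wᵗ, w, η) ∈ ℝ × ℝ × ℝ^d × ℝ`. -/
def nnk (d : ℕ) (σ σ' : ℝ → ℝ)
    (t : ℝ) (x : EuclideanSpace ℝ (Fin d)) (t' : ℝ) (x' : EuclideanSpace ℝ (Fin d))
    (p : ℝ × ℝ × EuclideanSpace ℝ (Fin d) × ℝ) : ℝ :=
  σ (p.2.1 * t + (inner ℝ p.2.2.1 x : ℝ) + p.2.2.2) *
      σ (p.2.1 * t' + (inner ℝ p.2.2.1 x' : ℝ) + p.2.2.2)
    + p.1 ^ 2 * σ' (p.2.1 * t + (inner ℝ p.2.2.1 x : ℝ) + p.2.2.2) *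
        σ' (p.2.1 * t' + (inner ℝ p.2.2.1 x' : ℝ) + p.2.2.2) *
        (t * t' + (inner ℝ x x' : ℝ) + 1)

open scoped NNReal

lemma abs_mul_sub_mul_le_of_lipschitz {f : ℝ → ℝ} {C : ℝ} {K : ℝ≥0}
    (hf : ∀ y, |f y| ≤ C) (hK : LipschitzWith K f) (a b a' b' : ℝ) :
    |f a * f b - f a' * f b'| ≤ C * K * (|a - a'| + |b - b'|) := by
  have hC : 0 ≤ C := (abs_nonneg _).trans (hf 0)
  have hlip (u v : ℝ) : |f u - f v| ≤ K * |u - v| := by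
    simpa only [Real.dist_eq] using hK.dist_le_mul u v
  calc |f a * f b - f a' * f b'| = |f a * (f b - f b') + f b' * (f a - f a')| := by
        congr 1; ring
    _ ≤ |f a| * |f b - f b'| + |f b'| * |f a - f a'| := by
        grw [abs_add_le, abs_mul, abs_mul]
    _ ≤ C * (K * |b - b'|) + C * (K * |a - a'|) := by
        gcongr
        exacts [hf a, hlip b b', hf b', hlip a a']
    _ = C * K * (|a - a'| + |b - b'|) := by ring

lemma abs_sq_mul_sub_sq_mul_le (a b u v : ℝ) :
    |a ^ 2 * u - b ^ 2 * v| ≤ (1 + a ^ 2 + b ^ 2) * (|a - b| * |u| + |u - v|) := by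
  have hab : |a + b| ≤ 1 + a ^ 2 + b ^ 2 := by
    cases abs_cases (a + b) <;> nlinarith [sq_nonneg (a - 1), sq_nonneg (a + 1),
      sq_nonneg (b - 1), sq_nonneg (b + 1)]
  calc |a ^ 2 * u - b ^ 2 * v| = |(a + b) * (a - b) * u + b ^ 2 * (u - v)| := by
        congr 1; ring
    _ ≤ |a + b| * (|a - b| * |u|) + b ^ 2 * |u - v| := by
        grw [abs_add_le, abs_mul, abs_mul, abs_mul, abs_of_nonneg (sq_nonneg b), mul_assoc]
    _ ≤ (1 + a ^ 2 + b ^ 2) * (|a - b| * |u|) + (1 + a ^ 2 + b ^ 2) * |u - v| := by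
        gcongr
        nlinarith [sq_nonneg a]
    _ = (1 + a ^ 2 + b ^ 2) * (|a - b| * |u| + |u - v|) := by ring

section NeuronParameters

variable {E : Type*} [NormedAddCommGroup E]

def weightDist (p q : ℝ × ℝ × E × ℝ) : ℝ :=
  |p.2.1 - q.2.1| + ‖p.2.2.1 - q.2.2.1‖ + |p.2.2.2 - q.2.2.2|

lemma weightDist_nonneg (p q : ℝ × ℝ × E × ℝ) : 0 ≤ weightDist p q := by
  unfold weightDist
  positivity

variable [InnerProductSpace ℝ E]

def preactivation (p : ℝ × ℝ × E × ℝ) (t : ℝ) (x : E) : ℝ :=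
  p.2.1 * t + inner ℝ p.2.2.1 x + p.2.2.2

lemma abs_preactivation_sub_le {M t : ℝ} {x : E} (hM : 1 ≤ M) (ht : |t| ≤ M)
    (hx : ‖x‖ ≤ M) (p q : ℝ × ℝ × E × ℝ) :
    |preactivation p t x - preactivation q t x| ≤ M * weightDist p q := by
  have hsplit : preactivation p t x - preactivation q t x
      = (p.2.1 - q.2.1) * t + inner ℝ (p.2.2.1 - q.2.2.1) x + (p.2.2.2 - q.2.2.2) := by
    simp only [preactivation, inner_sub_left]
    ring
  have hinner : |inner ℝ (p.2.2.1 - q.2.2.1) x| ≤ ‖p.2.2.1 - q.2.2.1‖ * M :=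
    (abs_real_inner_le_norm _ _).trans (by gcongr)
  rw [hsplit, weightDist]
  grw [abs_add_le, abs_add_le, abs_mul, hinner, ht]
  nlinarith [abs_nonneg (p.2.2.2 - q.2.2.2)]

lemma abs_mul_add_inner_add_one_le {M t t' : ℝ} {x x' : E} (hM : 1 ≤ M)
    (ht : |t| ≤ M) (ht' : |t'| ≤ M) (hx : ‖x‖ ≤ M) (hx' : ‖x'‖ ≤ M) :
    |t * t' + inner ℝ x x' + 1| ≤ 3 * M ^ 2 := by
  have hxx' : |inner ℝ x x'| ≤ M * M :=
    (abs_real_inner_le_norm _ _).trans (mul_le_mul hx hx' (norm_nonneg _) (by linarith))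
  grw [abs_add_le, abs_add_le, abs_mul, ht, ht', hxx', abs_one]
  nlinarith

end NeuronParameters

lemma nnk_eq {d : ℕ} (σ σ' : ℝ → ℝ) (t : ℝ) (x : EuclideanSpace ℝ (Fin d)) (t' : ℝ)
    (x' : EuclideanSpace ℝ (Fin d)) (p : ℝ × ℝ × EuclideanSpace ℝ (Fin d) × ℝ) :
    nnk d σ σ' t x t' x' p
      = σ (preactivation p t x) * σ (preactivation p t' x')
        + p.1 ^ 2 * (σ' (preactivation p t x) * σ' (preactivation p t' x'))
          * (t * t' + inner ℝ x x' + 1) := by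
  simp only [nnk, preactivation]
  ring

lemma abs_nnk_sub_le {d : ℕ} {σ σ' : ℝ → ℝ} {C C' : ℝ} {K K' : ℝ≥0}
    (hσ : ∀ y, |σ y| ≤ C) (hσK : LipschitzWith K σ)
    (hσ' : ∀ y, |σ' y| ≤ C') (hσ'K : LipschitzWith K' σ')
    {M t t' : ℝ} {x x' : EuclideanSpace ℝ (Fin d)} (hM : 1 ≤ M)
    (ht : |t| ≤ M) (ht' : |t'| ≤ M) (hx : ‖x‖ ≤ M) (hx' : ‖x'‖ ≤ M)
    (p q : ℝ × ℝ × EuclideanSpace ℝ (Fin d) × ℝ) :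
    |nnk d σ σ' t x t' x' p - nnk d σ σ' t x t' x' q| ≤
      (2 * C * K * M + 3 * M ^ 2 * C' ^ 2 + 6 * M ^ 3 * C' * K') * (1 + p.1 ^ 2 + q.1 ^ 2) *
        (|p.1 - q.1| + |p.2.1 - q.2.1| + ‖p.2.2.1 - q.2.2.1‖ + |p.2.2.2 - q.2.2.2|) := by
  have hC : 0 ≤ C := (abs_nonneg _).trans (hσ 0)
  have hC' : 0 ≤ C' := (abs_nonneg _).trans (hσ' 0)
  set u := preactivation p t x
  set v := preactivation p t' x'
  set u₂ := preactivation q t x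
  set v₂ := preactivation q t' x'
  set e := 1 + p.1 ^ 2 + q.1 ^ 2
  set S := weightDist p q
  have he : 1 ≤ e := by nlinarith [sq_nonneg p.1, sq_nonneg q.1]
  have hS : 0 ≤ S := weightDist_nonneg p q
  have hshift : |u - u₂| + |v - v₂| ≤ 2 * M * S := by
    linarith [abs_preactivation_sub_le hM ht hx p q, abs_preactivation_sub_le hM ht' hx' p q]
  have hσσ : |σ u * σ v - σ u₂ * σ v₂| ≤ C * K * (2 * M * S) :=
    (abs_mul_sub_mul_le_of_lipschitz hσ hσK u v u₂ v₂).trans (by gcongr)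
  have hσ'σ' : |σ' u * σ' v - σ' u₂ * σ' v₂| ≤ C' * K' * (2 * M * S) :=
    (abs_mul_sub_mul_le_of_lipschitz hσ' hσ'K u v u₂ v₂).trans (by gcongr)
  have hσ'σ'_bdd : |σ' u * σ' v| ≤ C' ^ 2 := by
    rw [abs_mul, sq]
    exact mul_le_mul (hσ' u) (hσ' v) (abs_nonneg _) hC'
  have hgram := abs_mul_add_inner_add_one_le hM ht ht' hx hx'
  have hsplit : nnk d σ σ' t x t' x' p - nnk d σ σ' t x t' x' q
      = (σ u * σ v - σ u₂ * σ v₂)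
        + (p.1 ^ 2 * (σ' u * σ' v) - q.1 ^ 2 * (σ' u₂ * σ' v₂))
          * (t * t' + inner ℝ x x' + 1) := by
    rw [nnk_eq, nnk_eq]
    ring
  set Δ := |p.1 - q.1|
  have hΔ : 0 ≤ Δ := abs_nonneg _
  calc |nnk d σ σ' t x t' x' p - nnk d σ σ' t x t' x' q|
      ≤ C * K * (2 * M * S) + e * (Δ * C' ^ 2 + C' * K' * (2 * M * S)) * (3 * M ^ 2) := by
        rw [hsplit]
        grw [abs_add_le, abs_mul, hσσ, hgram, abs_sq_mul_sub_sq_mul_le, hσ'σ'_bdd, hσ'σ']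
    _ ≤ C * K * (2 * M * (e * (Δ + S)))
        + e * ((Δ + S) * C' ^ 2 + C' * K' * (2 * M * (Δ + S))) * (3 * M ^ 2) := by
        have hSe : S ≤ e * (Δ + S) := by nlinarith
        gcongr <;> linarith
    _ = _ := by
        simp only [S, weightDist]
        ring

theorem nnk_lipschitz_params_general
    (d : ℕ) (T : ℝ)
    (D : Set (EuclideanSpace ℝ (Fin d)))
    (R_D : ℝ) (hD_sub : D ⊆ Metric.closedBall 0 R_D)
    (σ σ' : ℝ → ℝ) (C_σ L_σ C_σ' L_σ' : ℝ)
    (hσ_bdd : ∀ y : ℝ, |σ y| ≤ C_σ) (hσ_lip : LipschitzWith (Real.toNNReal L_σ) σ)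
    (hσ'_bdd : ∀ y : ℝ, |σ' y| ≤ C_σ') (hσ'_lip : LipschitzWith (Real.toNNReal L_σ') σ') :
    ∃ C : ℝ, ∀ t ∈ Icc (0:ℝ) T, ∀ t' ∈ Icc (0:ℝ) T, ∀ x ∈ D, ∀ x' ∈ D,
      ∀ p q : ℝ × ℝ × EuclideanSpace ℝ (Fin d) × ℝ,
        |nnk d σ σ' t x t' x' p - nnk d σ σ' t x t' x' q| ≤
          C * (1 + p.1 ^ 2 + q.1 ^ 2) *
            (|p.1 - q.1| + |p.2.1 - q.2.1| + ‖p.2.2.1 - q.2.2.1‖ + |p.2.2.2 - q.2.2.2|) := by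
  set M := max (max T R_D) 1
  have hM : 1 ≤ M := le_max_right _ _
  have htime {t : ℝ} (ht : t ∈ Icc 0 T) : |t| ≤ M := by
    rw [abs_of_nonneg ht.1]
    exact ht.2.trans ((le_max_left _ _).trans (le_max_left _ _))
  have hspace {x : EuclideanSpace ℝ (Fin d)} (hx : x ∈ D) : ‖x‖ ≤ M :=
    (mem_closedBall_zero_iff.mp (hD_sub hx)).trans ((le_max_right _ _).trans (le_max_left _ _))
  exact ⟨_, fun t ht t' ht' x hx x' hx' p q => abs_nnk_sub_le hσ_bdd hσ_lip hσ'_bdd hσ'_lip hM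
    (htime ht) (htime ht') (hspace hx) (hspace hx') p q⟩

/-- local Lipschitz continuity of `k` in the network parameters:
there is a constant `C` with
`|k(t,x,t',x';p¹) − k(t,x,t',x';p²)|
  ≤ C (1 + (c¹)² + (c²)²) (|c¹−c²| + |wᵗ¹−wᵗ²| + ‖w¹−w²‖ + |η¹−η²|)`
for all `t,t' ∈ [0,T]`, `x,x' ∈ D` and all parameter tuples `p¹,p²`. -/
theorem nnk_lipschitz_params
    (d : ℕ) (hd : 1 ≤ d) (T : ℝ) (hT : 0 < T)
    (D : Set (EuclideanSpace ℝ (Fin d))) (hD_ne : D.Nonempty) (hD_open : IsOpen D)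
    (R_D : ℝ) (hD_sub : D ⊆ Metric.closedBall 0 R_D) (hD_vol : volume D < ⊤)
    (σ σ' : ℝ → ℝ) (C_σ L_σ C_σ' L_σ' : ℝ)
    (hσ_bdd : ∀ y : ℝ, |σ y| ≤ C_σ) (hσ_lip : LipschitzWith (Real.toNNReal L_σ) σ)
    (hσ_deriv : ∀ y : ℝ, HasDerivAt σ (σ' y) y)
    (hσ'_bdd : ∀ y : ℝ, |σ' y| ≤ C_σ') (hσ'_lip : LipschitzWith (Real.toNNReal L_σ') σ') :
    ∃ C : ℝ, ∀ t ∈ Icc (0:ℝ) T, ∀ t' ∈ Icc (0:ℝ) T, ∀ x ∈ D, ∀ x' ∈ D,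
      ∀ p q : ℝ × ℝ × EuclideanSpace ℝ (Fin d) × ℝ,
        |nnk d σ σ' t x t' x' p - nnk d σ σ' t x t' x' q| ≤
          C * (1 + p.1 ^ 2 + q.1 ^ 2) *
            (|p.1 - q.1| + |p.2.1 - q.2.1| + ‖p.2.2.1 - q.2.2.1‖ + |p.2.2.2 - q.2.2.2|) :=
  nnk_lipschitz_params_general d T D R_D hD_sub σ σ' C_σ L_σ C_σ' L_σ' hσ_bdd hσ_lip hσ'_bdd hσ'_lip
end
end

section
/- There exists a constant L, depending only on T, vol(D), R_D, the bounds and Lipschitz constants of σ and σ', and the moments of μ₀, such that for every û ∈ L²(D_T) and all (t¹,x¹), (t²,x²) ∈ D_T, |(T_{B₀}û)(t¹,x¹) − (T_{B₀}û)(t²,x²)| ≤ L ‖û‖_{L²(D_T)} (|t¹−t²| + ‖x¹−x²‖). -/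
/-!
On the bounded cylinder `D_T`, and for `|c|` bounded (which holds `μ₀`-a.e.), the integrand `k` is
bounded uniformly in the parameters, and `k(·, z', p)` is Lipschitz with a constant affine in
`|wᵗ| + ‖w‖`, which is `μ₀`-integrable by the moment assumption. Integrating over `μ₀` makes
`B₀(·, z')` Lipschitz uniformly in `z'`, and then
`|T_{B₀}û(z₁) - T_{B₀}û(z₂)| ≤ Lip(B₀) ‖û‖_{L¹} ≤ Lip(B₀) vol(D_T)^{1/2} ‖û‖_{L²}`.
-/

open MeasureTheory Set

noncomputable section

/-- The neural-network kernel `B₀(t,x,t',x') = ∫ k(t,x,t',x'; ·) dμ₀`. -/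
def nnB (d : ℕ) (σ σ' : ℝ → ℝ)
    (μ₀ : Measure (ℝ × ℝ × EuclideanSpace ℝ (Fin d) × ℝ))
    (t : ℝ) (x : EuclideanSpace ℝ (Fin d)) (t' : ℝ) (x' : EuclideanSpace ℝ (Fin d)) : ℝ :=
  ∫ p, nnk d σ σ' t x t' x' p ∂μ₀

/-- Lebesgue measure restricted to the time-space cylinder `D_T = (0,T) × D`. -/
def μDT (d : ℕ) (T : ℝ) (D : Set (EuclideanSpace ℝ (Fin d))) :
    Measure (ℝ × EuclideanSpace ℝ (Fin d)) :=
  volume.restrict (Ioo (0:ℝ) T ×ˢ D)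

/-- The neural-network integral operator
`(T_{B₀}û)(t,x) = ∫₀^T ∫_D B₀(t,x,t',x') û(t',x') dx' dt'`. -/
def nnT (d : ℕ) (T : ℝ) (D : Set (EuclideanSpace ℝ (Fin d))) (σ σ' : ℝ → ℝ)
    (μ₀ : Measure (ℝ × ℝ × EuclideanSpace ℝ (Fin d) × ℝ))
    (u : ℝ × EuclideanSpace ℝ (Fin d) → ℝ)
    (z : ℝ × EuclideanSpace ℝ (Fin d)) : ℝ :=
  ∫ z', nnB d σ σ' μ₀ z.1 z.2 z'.1 z'.2 * u z' ∂(μDT d T D)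

/-- The `L²(D_T × D_T)` norm of the kernel `B₀`. -/
def nnBnormL2 (d : ℕ) (T : ℝ) (D : Set (EuclideanSpace ℝ (Fin d))) (σ σ' : ℝ → ℝ)
    (μ₀ : Measure (ℝ × ℝ × EuclideanSpace ℝ (Fin d) × ℝ)) : ℝ :=
  Real.sqrt (∫ z, (∫ z', (nnB d σ σ' μ₀ z.1 z.2 z'.1 z'.2) ^ 2 ∂(μDT d T D)) ∂(μDT d T D))

open scoped NNReal RealInnerProductSpace

section Operator

variable {α : Type*} [MeasurableSpace α] {μ : Measure α} [IsFiniteMeasure μ]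

theorem integral_norm_le_sqrt_measureReal_univ_mul_eLpNorm_two {E : Type*}
    [NormedAddCommGroup E] {u : α → E} (hu : MemLp u 2 μ) :
    ∫ y, ‖u y‖ ∂μ ≤ √(μ.real univ) * (eLpNorm u 2 μ).toReal := by
  have hL1 : eLpNorm u 1 μ ≤ eLpNorm u 2 μ * μ univ ^ (1 / 2 : ℝ) := by
    convert eLpNorm_le_eLpNorm_mul_rpow_measure_univ one_le_two hu.1 using 3
    norm_num
  calc ∫ y, ‖u y‖ ∂μ = (eLpNorm u 1 μ).toReal := by
        rw [integral_norm_eq_lintegral_enorm hu.1, eLpNorm_one_eq_lintegral_enorm]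
    _ ≤ (eLpNorm u 2 μ * μ univ ^ (1 / 2 : ℝ)).toReal :=
        ENNReal.toReal_mono (by finiteness) hL1
    _ = √(μ.real univ) * (eLpNorm u 2 μ).toReal := by
        rw [ENNReal.toReal_mul, ← ENNReal.toReal_rpow, Real.sqrt_eq_rpow, measureReal_def,
          mul_comm]

theorem abs_integral_mul_le_of_ae_abs_le {k u : α → ℝ} {C : ℝ} (hC : 0 ≤ C)
    (hk : ∀ᵐ y ∂μ, |k y| ≤ C) (hu : MemLp u 2 μ) :
    |∫ y, k y * u y ∂μ| ≤ C * √(μ.real univ) * (eLpNorm u 2 μ).toReal := by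
  rw [← Real.norm_eq_abs]
  calc ‖∫ y, k y * u y ∂μ‖ ≤ ∫ y, C * ‖u y‖ ∂μ := by
        refine norm_integral_le_of_norm_le ((hu.integrable one_le_two).norm.const_mul C) ?_
        filter_upwards [hk] with y hy
        rw [norm_mul]
        exact mul_le_mul_of_nonneg_right hy (norm_nonneg _)
    _ ≤ C * (√(μ.real univ) * (eLpNorm u 2 μ).toReal) := by
        rw [integral_const_mul]
        exact mul_le_mul_of_nonneg_left
          (integral_norm_le_sqrt_measureReal_univ_mul_eLpNorm_two hu) hC
    _ = C * √(μ.real univ) * (eLpNorm u 2 μ).toReal := (mul_assoc _ _ _).symm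

theorem abs_integral_mul_sub_integral_mul_le {k₁ k₂ u : α → ℝ} {M C : ℝ}
    (hk₁ : AEStronglyMeasurable k₁ μ) (hk₂ : AEStronglyMeasurable k₂ μ)
    (hM₁ : ∀ᵐ y ∂μ, |k₁ y| ≤ M) (hM₂ : ∀ᵐ y ∂μ, |k₂ y| ≤ M)
    (hC : 0 ≤ C) (hk : ∀ᵐ y ∂μ, |k₁ y - k₂ y| ≤ C) (hu : MemLp u 2 μ) :
    |∫ y, k₁ y * u y ∂μ - ∫ y, k₂ y * u y ∂μ| ≤
      C * √(μ.real univ) * (eLpNorm u 2 μ).toReal := by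
  have hu₁ : Integrable u μ := hu.integrable one_le_two
  rw [← integral_sub (hu₁.bdd_mul hk₁ hM₁) (hu₁.bdd_mul hk₂ hM₂)]
  simp_rw [← sub_mul]
  exact abs_integral_mul_le_of_ae_abs_le hC hk hu

end Operator

theorem abs_mul_add_inner_le {E : Type*} [NormedAddCommGroup E] [InnerProductSpace ℝ E]
    (s t : ℝ) (x y : E) : |s * t + ⟪x, y⟫| ≤ (|s| + ‖x‖) * (|t| + ‖y‖) := by
  have hst : |s * t| ≤ |s| * |t| := (abs_mul s t).le
  have hxy : |⟪x, y⟫| ≤ ‖x‖ * ‖y‖ := abs_real_inner_le_norm x y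
  have : 0 ≤ |s| * ‖y‖ + ‖x‖ * |t| := by positivity
  linarith [abs_add_le (s * t) ⟪x, y⟫]

theorem abs_mul_add_inner_add_one_le_s7 {E : Type*} [NormedAddCommGroup E] [InnerProductSpace ℝ E]
    {ρ s t : ℝ} {x y : E} (hsx : |s| + ‖x‖ ≤ ρ) (hty : |t| + ‖y‖ ≤ ρ) :
    |s * t + ⟪x, y⟫ + 1| ≤ ρ ^ 2 + 1 := by
  have hρ : 0 ≤ ρ := (add_nonneg (abs_nonneg _) (norm_nonneg _)).trans hsx
  calc |s * t + ⟪x, y⟫ + 1| ≤ (|s| + ‖x‖) * (|t| + ‖y‖) + 1 :=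
        (abs_add_le _ _).trans (by simpa using abs_mul_add_inner_le s t x y)
    _ ≤ ρ ^ 2 + 1 := by rw [sq]; gcongr

section Kernel

variable {d : ℕ} {σ σ' : ℝ → ℝ} {Cσ Cσ' R ρ : ℝ}
  {μ₀ : Measure (ℝ × ℝ × EuclideanSpace ℝ (Fin d) × ℝ)}

theorem abs_nnk_le (hσ : ∀ y, |σ y| ≤ Cσ) (hσ' : ∀ y, |σ' y| ≤ Cσ')
    {p : ℝ × ℝ × EuclideanSpace ℝ (Fin d) × ℝ} (hc : |p.1| ≤ R)
    {t t' : ℝ} {x x' : EuclideanSpace ℝ (Fin d)}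
    (hz : |t| + ‖x‖ ≤ ρ) (hz' : |t'| + ‖x'‖ ≤ ρ) :
    |nnk d σ σ' t x t' x' p| ≤ Cσ ^ 2 + R ^ 2 * Cσ' ^ 2 * (ρ ^ 2 + 1) := by
  set a := p.2.1 * t + ⟪p.2.2.1, x⟫ + p.2.2.2
  set b := p.2.1 * t' + ⟪p.2.2.1, x'⟫ + p.2.2.2
  have hc2 : p.1 ^ 2 ≤ R ^ 2 := sq_le_sq' (abs_le.1 hc).1 (abs_le.1 hc).2
  have hP := abs_mul_add_inner_add_one_le_s7 hz hz'
  have hCσ : 0 ≤ Cσ := (abs_nonneg _).trans (hσ 0)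
  have hCσ' : 0 ≤ Cσ' := (abs_nonneg _).trans (hσ' 0)
  calc |nnk d σ σ' t x t' x' p|
      ≤ |σ a| * |σ b| + p.1 ^ 2 * |σ' a| * |σ' b| * |t * t' + ⟪x, x'⟫ + 1| := by
        refine (abs_add_le _ _).trans_eq ?_
        simp only [abs_mul, abs_pow, sq_abs]
        rfl
    _ ≤ Cσ * Cσ + R ^ 2 * Cσ' * Cσ' * (ρ ^ 2 + 1) := by
        gcongr
        exacts [hσ a, hσ b, hσ' a, hσ' b]
    _ = Cσ ^ 2 + R ^ 2 * Cσ' ^ 2 * (ρ ^ 2 + 1) := by ring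

theorem abs_nnk_sub_le_s7 {Kσ Kσ' : ℝ≥0} (hσ : ∀ y, |σ y| ≤ Cσ) (hσl : LipschitzWith Kσ σ)
    (hσ' : ∀ y, |σ' y| ≤ Cσ') (hσ'l : LipschitzWith Kσ' σ')
    {p : ℝ × ℝ × EuclideanSpace ℝ (Fin d) × ℝ} (hc : |p.1| ≤ R)
    {t₁ t₂ t' : ℝ} {x₁ x₂ x' : EuclideanSpace ℝ (Fin d)}
    (hz₁ : |t₁| + ‖x₁‖ ≤ ρ) (hz' : |t'| + ‖x'‖ ≤ ρ) :
    |nnk d σ σ' t₁ x₁ t' x' p - nnk d σ σ' t₂ x₂ t' x' p| ≤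
      ((Cσ * Kσ + R ^ 2 * Cσ' * Kσ' * (ρ ^ 2 + 1)) * (|p.2.1| + ‖p.2.2.1‖)
        + R ^ 2 * Cσ' ^ 2 * ρ) * (|t₁ - t₂| + ‖x₁ - x₂‖) := by
  set a₁ := p.2.1 * t₁ + ⟪p.2.2.1, x₁⟫ + p.2.2.2
  set a₂ := p.2.1 * t₂ + ⟪p.2.2.1, x₂⟫ + p.2.2.2
  set b := p.2.1 * t' + ⟪p.2.2.1, x'⟫ + p.2.2.2
  set P₁ := t₁ * t' + ⟪x₁, x'⟫ + 1
  set P₂ := t₂ * t' + ⟪x₂, x'⟫ + 1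
  set Δ := |t₁ - t₂| + ‖x₁ - x₂‖
  have ha : |a₁ - a₂| ≤ (|p.2.1| + ‖p.2.2.1‖) * Δ := by
    have : a₁ - a₂ = p.2.1 * (t₁ - t₂) + ⟪p.2.2.1, x₁ - x₂⟫ := by
      rw [inner_sub_right]; ring
    exact this ▸ abs_mul_add_inner_le _ _ _ _
  have hP : |P₁ - P₂| ≤ Δ * ρ := by
    have : P₁ - P₂ = (t₁ - t₂) * t' + ⟪x₁ - x₂, x'⟫ := by
      rw [inner_sub_left]; ring
    exact this ▸ (abs_mul_add_inner_le _ _ _ _).trans (by gcongr)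
  have hσa : |σ a₁ - σ a₂| ≤ Kσ * ((|p.2.1| + ‖p.2.2.1‖) * Δ) :=
    (hσl.dist_le_mul a₁ a₂).trans (by rw [Real.dist_eq]; gcongr)
  have hσ'a : |σ' a₁ - σ' a₂| ≤ Kσ' * ((|p.2.1| + ‖p.2.2.1‖) * Δ) :=
    (hσ'l.dist_le_mul a₁ a₂).trans (by rw [Real.dist_eq]; gcongr)
  have hc2 : p.1 ^ 2 ≤ R ^ 2 := sq_le_sq' (abs_le.1 hc).1 (abs_le.1 hc).2
  have hP₁ := abs_mul_add_inner_add_one_le_s7 hz₁ hz'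
  have hCσ : 0 ≤ Cσ := (abs_nonneg _).trans (hσ 0)
  have hCσ' : 0 ≤ Cσ' := (abs_nonneg _).trans (hσ' 0)
  have hsplit : nnk d σ σ' t₁ x₁ t' x' p - nnk d σ σ' t₂ x₂ t' x' p =
      (σ a₁ - σ a₂) * σ b + p.1 ^ 2 * σ' b * ((σ' a₁ - σ' a₂) * P₁ + σ' a₂ * (P₁ - P₂)) := by
    simp only [nnk]; ring
  calc |nnk d σ σ' t₁ x₁ t' x' p - nnk d σ σ' t₂ x₂ t' x' p|
      ≤ |σ a₁ - σ a₂| * |σ b| +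
          p.1 ^ 2 * |σ' b| * (|σ' a₁ - σ' a₂| * |P₁| + |σ' a₂| * |P₁ - P₂|) := by
        rw [hsplit]
        refine (abs_add_le _ _).trans ?_
        simp only [abs_mul, abs_pow, sq_abs]
        gcongr
        exact (abs_add_le _ _).trans_eq (by simp only [abs_mul])
    _ ≤ Kσ * ((|p.2.1| + ‖p.2.2.1‖) * Δ) * Cσ + R ^ 2 * Cσ' *
          (Kσ' * ((|p.2.1| + ‖p.2.2.1‖) * Δ) * (ρ ^ 2 + 1) + Cσ' * (Δ * ρ)) := by
        gcongr
        exacts [hσ b, hσ' b, hσ' a₂]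
    _ = _ := by ring

theorem continuous_nnk_uncurry (hσ : Continuous σ) (hσ' : Continuous σ')
    (t : ℝ) (x : EuclideanSpace ℝ (Fin d)) :
    Continuous fun q : (ℝ × EuclideanSpace ℝ (Fin d)) ×
        (ℝ × ℝ × EuclideanSpace ℝ (Fin d) × ℝ) => nnk d σ σ' t x q.1.1 q.1.2 q.2 := by
  unfold nnk
  fun_prop

theorem continuous_nnk (hσ : Continuous σ) (hσ' : Continuous σ')
    (t : ℝ) (x : EuclideanSpace ℝ (Fin d)) (t' : ℝ) (x' : EuclideanSpace ℝ (Fin d)) :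
    Continuous (nnk d σ σ' t x t' x') := by
  unfold nnk
  fun_prop

theorem stronglyMeasurable_nnB [SFinite μ₀] (hσ : Continuous σ) (hσ' : Continuous σ')
    (t : ℝ) (x : EuclideanSpace ℝ (Fin d)) :
    StronglyMeasurable fun z' : ℝ × EuclideanSpace ℝ (Fin d) => nnB d σ σ' μ₀ t x z'.1 z'.2 :=
  (continuous_nnk_uncurry hσ hσ' t x).stronglyMeasurable.integral_prod_right'

theorem abs_nnB_le [IsProbabilityMeasure μ₀]
    (hσ : ∀ y, |σ y| ≤ Cσ) (hσ' : ∀ y, |σ' y| ≤ Cσ') (hc : ∀ᵐ p ∂μ₀, |p.1| ≤ R)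
    {t t' : ℝ} {x x' : EuclideanSpace ℝ (Fin d)}
    (hz : |t| + ‖x‖ ≤ ρ) (hz' : |t'| + ‖x'‖ ≤ ρ) :
    |nnB d σ σ' μ₀ t x t' x'| ≤ Cσ ^ 2 + R ^ 2 * Cσ' ^ 2 * (ρ ^ 2 + 1) := by
  simpa [nnB] using norm_integral_le_of_norm_le_const (f := nnk d σ σ' t x t' x')
    (hc.mono fun p hp => (Real.norm_eq_abs _).trans_le (abs_nnk_le hσ hσ' hp hz hz'))

theorem integrable_abs_add_norm_of_integrable_sq [IsFiniteMeasure μ₀]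
    (h : Integrable (fun p : ℝ × ℝ × EuclideanSpace ℝ (Fin d) × ℝ =>
      |p.2.1| ^ 2 + ‖p.2.2.1‖ ^ 2 + |p.2.2.2| ^ 2) μ₀) :
    Integrable (fun p : ℝ × ℝ × EuclideanSpace ℝ (Fin d) × ℝ => |p.2.1| + ‖p.2.2.1‖) μ₀ := by
  refine ((integrable_const 2).add h).mono' (by fun_prop) (ae_of_all _ fun p => ?_)
  have h₁ : |p.2.1| ≤ 1 + |p.2.1| ^ 2 := by nlinarith [sq_nonneg (|p.2.1| - 1)]
  have h₂ : ‖p.2.2.1‖ ≤ 1 + ‖p.2.2.1‖ ^ 2 := by nlinarith [sq_nonneg (‖p.2.2.1‖ - 1)]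
  rw [Real.norm_of_nonneg (by positivity), Pi.add_apply]
  linarith [sq_nonneg |p.2.2.2|]

theorem exists_lipschitz_nnB [IsFiniteMeasure μ₀] {Kσ Kσ' : ℝ≥0}
    (hσ : ∀ y, |σ y| ≤ Cσ) (hσl : LipschitzWith Kσ σ)
    (hσ' : ∀ y, |σ' y| ≤ Cσ') (hσ'l : LipschitzWith Kσ' σ')
    (hc : ∀ᵐ p ∂μ₀, |p.1| ≤ R) (hρ : 0 ≤ ρ)
    (hW : Integrable
      (fun p : ℝ × ℝ × EuclideanSpace ℝ (Fin d) × ℝ => |p.2.1| + ‖p.2.2.1‖) μ₀) :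
    ∃ K, 0 ≤ K ∧ ∀ (t₁ t₂ t' : ℝ) (x₁ x₂ x' : EuclideanSpace ℝ (Fin d)),
      |t₁| + ‖x₁‖ ≤ ρ → |t₂| + ‖x₂‖ ≤ ρ → |t'| + ‖x'‖ ≤ ρ →
      |nnB d σ σ' μ₀ t₁ x₁ t' x' - nnB d σ σ' μ₀ t₂ x₂ t' x'| ≤
        K * (|t₁ - t₂| + ‖x₁ - x₂‖) := by
  have hCσ : 0 ≤ Cσ := (abs_nonneg _).trans (hσ 0)
  have hCσ' : 0 ≤ Cσ' := (abs_nonneg _).trans (hσ' 0)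
  set A₁ := Cσ * Kσ + R ^ 2 * Cσ' * Kσ' * (ρ ^ 2 + 1)
  set A₂ := R ^ 2 * Cσ' ^ 2 * ρ
  refine ⟨∫ p, (A₁ * (|p.2.1| + ‖p.2.2.1‖) + A₂) ∂μ₀,
    integral_nonneg fun p => by positivity, fun t₁ t₂ t' x₁ x₂ x' hz₁ hz₂ hz' => ?_⟩
  have hint : ∀ {t x}, |t| + ‖x‖ ≤ ρ → Integrable (nnk d σ σ' t x t' x') μ₀ := fun hz =>
    Integrable.of_bound
      (continuous_nnk hσl.continuous hσ'l.continuous _ _ _ _).aestronglyMeasurable _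
      (hc.mono fun p hp => abs_nnk_le hσ hσ' hp hz hz')
  rw [nnB, nnB, ← integral_sub (hint hz₁) (hint hz₂), ← integral_mul_const,
    ← Real.norm_eq_abs]
  exact norm_integral_le_of_norm_le (((hW.const_mul A₁).add (integrable_const A₂)).mul_const _)
    (hc.mono fun p hp => abs_nnk_sub_le_s7 hσ hσl hσ' hσ'l hp hz₁ hz')

end Kernel

theorem nnT_lipschitz_general
    (d : ℕ) (T : ℝ)
    (D : Set (EuclideanSpace ℝ (Fin d)))
    (R_D : ℝ) (hD_sub : D ⊆ Metric.closedBall 0 R_D)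
    (σ σ' : ℝ → ℝ) (C_σ L_σ C_σ' L_σ' : ℝ)
    (hσ_bdd : ∀ y : ℝ, |σ y| ≤ C_σ) (hσ_lip : LipschitzWith (Real.toNNReal L_σ) σ)
    (hσ'_bdd : ∀ y : ℝ, |σ' y| ≤ C_σ') (hσ'_lip : LipschitzWith (Real.toNNReal L_σ') σ')
    (μ₀ : Measure (ℝ × ℝ × EuclideanSpace ℝ (Fin d) × ℝ)) [IsProbabilityMeasure μ₀]
    (hc_supp : ∃ R : ℝ, μ₀ {p | R < |p.1|} = 0)
    (hmoment : Integrable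
      (fun p : ℝ × ℝ × EuclideanSpace ℝ (Fin d) × ℝ =>
        |p.2.1| ^ 2 + ‖p.2.2.1‖ ^ 2 + |p.2.2.2| ^ 2) μ₀) :
    ∃ L : ℝ, ∀ u : ℝ × EuclideanSpace ℝ (Fin d) → ℝ, MemLp u 2 (μDT d T D) →
      ∀ z₁ ∈ Ioo (0:ℝ) T ×ˢ D, ∀ z₂ ∈ Ioo (0:ℝ) T ×ˢ D,
        |nnT d T D σ σ' μ₀ u z₁ - nnT d T D σ σ' μ₀ u z₂| ≤
          L * (eLpNorm u 2 (μDT d T D)).toReal * (|z₁.1 - z₂.1| + ‖z₁.2 - z₂.2‖) := by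
  obtain ⟨R, hR⟩ := hc_supp
  have hc : ∀ᵐ p ∂μ₀, |p.1| ≤ R := by simpa [ae_iff] using hR
  set ρ := |T| + |R_D|
  have hDT : Ioo (0:ℝ) T ×ˢ D ⊆ {z | |z.1| + ‖z.2‖ ≤ ρ} := fun z ⟨ht, hx⟩ =>
    add_le_add (by rw [abs_of_pos ht.1]; exact ht.2.le.trans (le_abs_self T))
      ((mem_closedBall_zero_iff.1 (hD_sub hx)).trans (le_abs_self R_D))
  have hS : MeasurableSet {z : ℝ × EuclideanSpace ℝ (Fin d) | |z.1| + ‖z.2‖ ≤ ρ} :=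
    measurableSet_le (by fun_prop) (by fun_prop)
  have hae : ∀ᵐ z ∂(μDT d T D), |z.1| + ‖z.2‖ ≤ ρ :=
    ae_restrict_of_ae_restrict_of_subset hDT (ae_restrict_mem hS)
  have : IsFiniteMeasure (μDT d T D) := isFiniteMeasure_restrict.2
    ((Metric.isBounded_Ioo 0 T).prod (Metric.isBounded_closedBall.subset hD_sub)).measure_lt_top.ne
  obtain ⟨K, hK, hKlip⟩ := exists_lipschitz_nnB hσ_bdd hσ_lip hσ'_bdd hσ'_lip hc (ρ := ρ)
    (by positivity) (integrable_abs_add_norm_of_integrable_sq hmoment)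
  refine ⟨K * √((μDT d T D).real univ), fun u hu z₁ hz₁ z₂ hz₂ => ?_⟩
  have hB := fun z (hz : z ∈ Ioo (0:ℝ) T ×ˢ D) => hae.mono fun z' hz' =>
    abs_nnB_le (μ₀ := μ₀) hσ_bdd hσ'_bdd hc (hDT hz) hz'
  have hdiff := abs_integral_mul_sub_integral_mul_le
    (stronglyMeasurable_nnB hσ_lip.continuous hσ'_lip.continuous z₁.1 z₁.2).aestronglyMeasurable
    (stronglyMeasurable_nnB hσ_lip.continuous hσ'_lip.continuous z₂.1 z₂.2).aestronglyMeasurable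
    (hB z₁ hz₁) (hB z₂ hz₂) (by positivity)
    (hae.mono fun z' hz' => hKlip _ _ _ _ _ _ (hDT hz₁) (hDT hz₂) hz') hu
  rw [nnT, nnT]
  linarith [hdiff]

/-- Lipschitz continuity of `T_{B₀}û`: there is a constant `L` such
that `|(T_{B₀}û)(t¹,x¹) − (T_{B₀}û)(t²,x²)| ≤ L ‖û‖_{L²(D_T)} (|t¹−t²| + ‖x¹−x²‖)`
for every `û ∈ L²(D_T)` and all `(t¹,x¹), (t²,x²) ∈ D_T`. -/
theorem nnT_lipschitz
    (d : ℕ) (hd : 1 ≤ d) (T : ℝ) (hT : 0 < T)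
    (D : Set (EuclideanSpace ℝ (Fin d))) (hD_ne : D.Nonempty) (hD_open : IsOpen D)
    (R_D : ℝ) (hD_sub : D ⊆ Metric.closedBall 0 R_D) (hD_vol : volume D < ⊤)
    (σ σ' : ℝ → ℝ) (C_σ L_σ C_σ' L_σ' : ℝ)
    (hσ_bdd : ∀ y : ℝ, |σ y| ≤ C_σ) (hσ_lip : LipschitzWith (Real.toNNReal L_σ) σ)
    (hσ_deriv : ∀ y : ℝ, HasDerivAt σ (σ' y) y)
    (hσ'_bdd : ∀ y : ℝ, |σ' y| ≤ C_σ') (hσ'_lip : LipschitzWith (Real.toNNReal L_σ') σ')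
    (μ₀ : Measure (ℝ × ℝ × EuclideanSpace ℝ (Fin d) × ℝ)) [IsProbabilityMeasure μ₀]
    (hc_supp : ∃ R : ℝ, μ₀ {p | R < |p.1|} = 0)
    (hmoment : Integrable
      (fun p : ℝ × ℝ × EuclideanSpace ℝ (Fin d) × ℝ =>
        |p.2.1| ^ 2 + ‖p.2.2.1‖ ^ 2 + |p.2.2.2| ^ 2) μ₀) :
    ∃ L : ℝ, ∀ u : ℝ × EuclideanSpace ℝ (Fin d) → ℝ, MemLp u 2 (μDT d T D) →
      ∀ z₁ ∈ Ioo (0:ℝ) T ×ˢ D, ∀ z₂ ∈ Ioo (0:ℝ) T ×ˢ D,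
        |nnT d T D σ σ' μ₀ u z₁ - nnT d T D σ σ' μ₀ u z₂| ≤
          L * (eLpNorm u 2 (μDT d T D)).toReal * (|z₁.1 - z₂.1| + ‖z₁.2 - z₂.2‖) :=
  nnT_lipschitz_general d T D R_D hD_sub σ σ' C_σ L_σ C_σ' L_σ' hσ_bdd hσ_lip hσ'_bdd hσ'_lip μ₀
    hc_supp hmoment
end
end
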